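/- arXiv:2510.00121 — 5 statements merged into one kernel-verified Lean document; each statement's English description precedes it below -/
import Mathlib

section
/- Let X be a metrizable compact convex subset of a locally convex space E. Then there exists a continuous strictly convex function f : X → ℝ. -/
/-!
Hahn–Banach gives, for any two distinct points of `X`, a continuous linear functional separating
them, and since `X × X` is second countable, countably many functionals `eₙ` suffice. Rescaled
so that `|eₙ| ≤ 2⁻ⁿ` on `X`, the series `∑ eₙ²` converges uniformly on `X`. Each term is convex,
and for `x ≠ y` a term with `eₙ x ≠ eₙ y` is strictly convex along `[x, y]`, so the sum is
strictly convex.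
-/

open Set

section SeparatingFunctionals

variable {E : Type*} [AddCommGroup E] [Module ℝ E] [TopologicalSpace E] [IsTopologicalAddGroup E]
  [ContinuousSMul ℝ E] [LocallyConvexSpace ℝ E]

theorem exists_clm_ne_of_not_inseparable {x y : E} (h : ¬Inseparable x y) :
    ∃ L : E →L[ℝ] ℝ, L x ≠ L y := by
  have hx : x ∉ closure {y} := fun hx ↦ h (specializes_iff_mem_closure.2 hx).inseparable.symm
  obtain ⟨L, u, hLx, hLy⟩ :=
    geometric_hahn_banach_point_closed (convex_singleton y).closure isClosed_closure hx
  exact ⟨L, (hLx.trans (hLy y (subset_closure rfl))).ne⟩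

theorem exists_seq_clm_separatesPoints (X : Set E) [SecondCountableTopology X] [T0Space X] :
    ∃ e : ℕ → E →L[ℝ] ℝ, ∀ x ∈ X, ∀ y ∈ X, x ≠ y → ∃ n, e n x ≠ e n y := by
  set U : (E →L[ℝ] ℝ) → Set (X × X) := fun L ↦ {p | L p.1 ≠ L p.2}
  have hU : ∀ L, IsOpen (U L) := fun L ↦ isOpen_ne_fun (by fun_prop) (by fun_prop)
  obtain ⟨T, hT, hTU⟩ := TopologicalSpace.isOpen_iUnion_countable U hU
  obtain ⟨e, he⟩ := (hT.insert 0).exists_eq_range (insert_nonempty _ _)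
  refine ⟨e, fun x hx y hy hxy ↦ ?_⟩
  have hxy' : ¬Inseparable (⟨x, hx⟩ : X) ⟨y, hy⟩ := fun h ↦ hxy congr($(h.eq).1)
  obtain ⟨L, hL⟩ := exists_clm_ne_of_not_inseparable
    (Topology.IsInducing.subtypeVal.inseparable_iff.not.2 hxy')
  have hmem : ((⟨x, hx⟩, ⟨y, hy⟩) : X × X) ∈ ⋃ L ∈ T, U L := hTU ▸ mem_iUnion.2 ⟨L, hL⟩
  obtain ⟨L', hL'T, hL'⟩ := mem_iUnion₂.1 hmem
  obtain ⟨n, rfl⟩ : L' ∈ range e := he ▸ mem_insert_of_mem _ hL'T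
  exact ⟨n, hL'⟩

theorem exists_seq_clm_separatesPoints_of_isCompact {X : Set E} (hX : IsCompact X)
    [SecondCountableTopology X] [T0Space X] :
    ∃ e : ℕ → E →L[ℝ] ℝ, (∀ n, ∀ z ∈ X, |e n z| ≤ (1 / 2) ^ n) ∧
      ∀ x ∈ X, ∀ y ∈ X, x ≠ y → ∃ n, e n x ≠ e n y := by
  obtain ⟨e, he⟩ := exists_seq_clm_separatesPoints X
  choose C hC using fun n ↦ hX.exists_bound_of_continuousOn (e n).continuous.continuousOn
  set r : ℕ → ℝ := fun n ↦ (1 / 2) ^ n / (1 + |C n|)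
  have hr : ∀ n, 0 < r n := fun n ↦ by positivity
  refine ⟨fun n ↦ r n • e n, fun n z hz ↦ ?_, fun x hx y hy hxy ↦ ?_⟩
  · have hez : |e n z| ≤ |C n| := (hC n z hz).trans (le_abs_self _)
    calc |r n * e n z| = (1 / 2) ^ n * (|e n z| / (1 + |C n|)) := by
          rw [abs_mul, abs_of_pos (hr n)]; ring
      _ ≤ (1 / 2) ^ n * 1 := by
          gcongr
          rw [div_le_one (by positivity)]
          linarith
      _ = (1 / 2) ^ n := mul_one _
  · obtain ⟨n, hn⟩ := he x hx y hy hxy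
    exact ⟨n, (mul_right_injective₀ (hr n).ne').ne hn⟩

end SeparatingFunctionals

theorem strictConvexOn_tsum {ι E : Type*} [AddCommGroup E] [Module ℝ E] {s : Set E}
    {f : ι → E → ℝ} (hs : Convex ℝ s) (hf : ∀ i, ConvexOn ℝ s (f i))
    (hsum : ∀ x ∈ s, Summable fun i ↦ f i x)
    (hstrict : ∀ x ∈ s, ∀ y ∈ s, x ≠ y → ∃ i, ∀ a b : ℝ, 0 < a → 0 < b → a + b = 1 →
      f i (a • x + b • y) < a • f i x + b • f i y) :
    StrictConvexOn ℝ s fun x ↦ ∑' i, f i x := by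
  refine ⟨hs, fun x hx y hy hxy a b ha hb hab ↦ ?_⟩
  obtain ⟨i, hi⟩ := hstrict x hx y hy hxy
  have hxs := (hsum x hx).const_smul a
  have hys := (hsum y hy).const_smul b
  calc ∑' i, f i (a • x + b • y) < ∑' i, (a • f i x + b • f i y) :=
        Summable.tsum_lt_tsum (fun j ↦ (hf j).2 hx hy ha.le hb.le hab) (hi a b ha hb hab)
          (hsum _ (hs hx hy ha.le hb.le hab)) (hxs.add hys)
    _ = a • ∑' i, f i x + b • ∑' i, f i y := by
        rw [hxs.tsum_add hys, tsum_const_smul'' a, tsum_const_smul'' b]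

/-- On a metrizable compact convex subset of a locally convex space there exists a
continuous strictly convex real function. -/
theorem exists_continuous_strictConvexOn (E : Type*) [AddCommGroup E] [Module ℝ E]
    [TopologicalSpace E] [IsTopologicalAddGroup E] [ContinuousSMul ℝ E]
    [LocallyConvexSpace ℝ E] (X : Set E) (hXc : IsCompact X) (hXconv : Convex ℝ X)
    [TopologicalSpace.MetrizableSpace X] :
    ∃ f : E → ℝ, ContinuousOn f X ∧ StrictConvexOn ℝ X f := by
  let := TopologicalSpace.metrizableSpaceMetric X
  have := isCompact_iff_compactSpace.mp hXc
  obtain ⟨e, he_le, he_sep⟩ := exists_seq_clm_separatesPoints_of_isCompact hXc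
  have hsq_le : ∀ n, ∀ z ∈ X, ‖e n z ^ 2‖ ≤ (1 / 4) ^ n := fun n z hz ↦ by
    rw [norm_pow, Real.norm_eq_abs, show (1 / 4 : ℝ) ^ n = ((1 / 2) ^ n) ^ 2 by
      rw [← pow_mul, mul_comm, pow_mul]; norm_num]
    exact pow_le_pow_left₀ (abs_nonneg _) (he_le n z hz) 2
  have hsum : Summable fun n : ℕ ↦ (1 / 4 : ℝ) ^ n :=
    summable_geometric_of_lt_one (by norm_num) (by norm_num)
  have hsq := Even.strictConvexOn_pow (n := 2) even_two two_ne_zero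
  refine ⟨fun z ↦ ∑' n, e n z ^ 2, continuousOn_tsum (fun n ↦ by fun_prop) hsum hsq_le, ?_⟩
  refine strictConvexOn_tsum hXconv
    (fun n ↦ (hsq.convexOn.comp_linearMap (e n).toLinearMap).subset (subset_univ _) hXconv)
    (fun z hz ↦ .of_norm_bounded hsum fun n ↦ hsq_le n z hz) fun x hx y hy hxy ↦ ?_
  obtain ⟨n, hn⟩ := he_sep x hx y hy hxy
  refine ⟨n, fun a b ha hb hab ↦ ?_⟩
  simpa only [map_add, map_smul] using hsq.2 (mem_univ _) (mem_univ _) hn ha hb hab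
end

section
/- Let X be a metrizable compact convex subset of a locally convex space E, f : X → ℝ a continuous strictly convex function, and f̄ its upper envelope (infimum of continuous affine majorants). Then every point x ∈ X with f(x) = f̄(x) is an extreme point of X. -/
open Set

variable {E : Type*} [AddCommGroup E] [Module ℝ E] [TopologicalSpace E]
  [IsTopologicalAddGroup E] [ContinuousSMul ℝ E] [LocallyConvexSpace ℝ E]

/-- `h` is continuous on `X` and affine on `X`. -/
def IsContAffineOn (X : Set E) (h : E → ℝ) : Prop :=
  ContinuousOn h X ∧ ∀ x ∈ X, ∀ y ∈ X, ∀ t ∈ Ioo (0:ℝ) 1,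
    h (t • x + (1 - t) • y) = t * h x + (1 - t) * h y

/-- The upper envelope of `f` on `X`. -/
noncomputable def upperEnv (X : Set E) (f : E → ℝ) (x : E) : ℝ :=
  sInf {r : ℝ | ∃ h : E → ℝ, IsContAffineOn X h ∧ (∀ y ∈ X, f y ≤ h y) ∧ r = h x}

/-!
If `x = a • y + b • z` lies in the open segment between distinct `y, z ∈ X`, every continuous affine
majorant `h` of `f` has `h x = a h y + b h z ≥ a f y + b f z`, so `a f y + b f z ≤ upperEnv X f x`,
whereas strict convexity gives `f x < a f y + b f z`. A constant majorant, which exists since `f` is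
bounded on the compact `X`, keeps the infimum defining `upperEnv` away from the junk value `0` that
`sInf ∅` takes.
-/

section UpperEnvelope

variable {V : Type*} [AddCommGroup V] [Module ℝ V] [TopologicalSpace V]
  {X : Set V} {f h : V → ℝ} {x y z : V} {a b : ℝ}

theorem IsContAffineOn.apply_add_smul (hh : IsContAffineOn X h) (hy : y ∈ X) (hz : z ∈ X)
    (ha : 0 < a) (hb : 0 < b) (hab : a + b = 1) :
    h (a • y + b • z) = a * h y + b * h z := by
  obtain rfl : b = 1 - a := by linarith
  exact hh.2 y hy z hz a ⟨ha, by linarith⟩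

theorem exists_isContAffineOn_majorant (hf : BddAbove (f '' X)) :
    ∃ h, IsContAffineOn X h ∧ ∀ y ∈ X, f y ≤ h y := by
  obtain ⟨M, hM⟩ := hf
  refine ⟨fun _ => M, ⟨continuousOn_const, fun _ _ _ _ _ _ => by ring⟩, fun y hy => ?_⟩
  exact hM (mem_image_of_mem f hy)

theorem le_upperEnv (hf : BddAbove (f '' X)) {c : ℝ}
    (hc : ∀ h, IsContAffineOn X h → (∀ y ∈ X, f y ≤ h y) → c ≤ h x) :
    c ≤ upperEnv X f x := by
  obtain ⟨h, hh, hfh⟩ := exists_isContAffineOn_majorant hf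
  refine le_csInf ⟨h x, h, hh, hfh, rfl⟩ ?_
  rintro r ⟨h, hh, hfh, rfl⟩
  exact hc h hh hfh

theorem mul_add_mul_le_upperEnv (hf : BddAbove (f '' X)) (hy : y ∈ X) (hz : z ∈ X)
    (ha : 0 < a) (hb : 0 < b) (hab : a + b = 1) :
    a * f y + b * f z ≤ upperEnv X f (a • y + b • z) := by
  refine le_upperEnv hf fun h hh hfh => ?_
  rw [hh.apply_add_smul hy hz ha hb hab]
  gcongr
  exacts [hfh y hy, hfh z hz]

theorem StrictConvexOn.lt_upperEnv_of_mem_openSegment (hfsc : StrictConvexOn ℝ X f)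
    (hf : BddAbove (f '' X)) (hy : y ∈ X) (hz : z ∈ X) (hyz : y ≠ z)
    (hx : x ∈ openSegment ℝ y z) : f x < upperEnv X f x := by
  obtain ⟨a, b, ha, hb, hab, rfl⟩ := hx
  calc f (a • y + b • z) < a • f y + b • f z := hfsc.2 hy hz hyz ha hb hab
    _ ≤ upperEnv X f (a • y + b • z) := mul_add_mul_le_upperEnv hf hy hz ha hb hab

end UpperEnvelope

theorem eq_upperEnv_mem_extremePoints_general (X : Set E) (hXc : IsCompact X)
    (f : E → ℝ) (hfc : ContinuousOn f X) (hfsc : StrictConvexOn ℝ X f) :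
    ∀ x ∈ X, f x = upperEnv X f x → x ∈ Set.extremePoints ℝ X := by
  intro x hx hfx
  refine ⟨hx, fun y hy z hz hseg => ?_⟩
  by_cases hyz : y = z
  · subst hyz
    rw [openSegment_same] at hseg
    exact hseg.symm
  · exact absurd hfx
      (hfsc.lt_upperEnv_of_mem_openSegment (hXc.bddAbove_image hfc) hy hz hyz hseg).ne

theorem eq_upperEnv_mem_extremePoints (X : Set E) (hXc : IsCompact X)
    (hXconv : Convex ℝ X) [TopologicalSpace.MetrizableSpace X]
    (f : E → ℝ) (hfc : ContinuousOn f X) (hfsc : StrictConvexOn ℝ X f) :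
    ∀ x ∈ X, f x = upperEnv X f x → x ∈ Set.extremePoints ℝ X :=
  eq_upperEnv_mem_extremePoints_general X hXc f hfc hfsc
end

section
/- Let f : ℝ⁺ → ℝ⁺ be a differentiable operator monotone function with f(1) = 1. Then 0 ≤ f'(1) ≤ 1. -/
open Set

/-- `g` is operator monotone on the positive half-line: for positive invertible
self-adjoint operators on any complex Hilbert space, `A ≤ B` implies
`g(A) ≤ g(B)` (via the continuous functional calculus). -/
def OperatorMonotonePos (g : ℝ → ℝ) : Prop :=
  ∀ (H : Type) [NormedAddCommGroup H] [InnerProductSpace ℂ H] [CompleteSpace H],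
    ∀ A B : H →L[ℂ] H, IsSelfAdjoint A → IsSelfAdjoint B →
      spectrum ℝ A ⊆ Set.Ioi 0 → spectrum ℝ B ⊆ Set.Ioi 0 →
      A ≤ B → cfc g A ≤ cfc g B

/-!
Test operator monotonicity on `ℂ²`. For a unit vector `u = (a, b)` let `A = s P_u + t (1 - P_u)`,
and let `B` be diagonal with entries `a²s + b²t + δ` and `m`, where `m` is chosen so that `B - A`
is a positive rank-one matrix. Then `A ≤ B`, and reading `f A ≤ f B` at the first basis vector
gives `a² f(s) + b² f(t) ≤ f(a²s + b²t + δ)`. Letting `δ → 0` shows that `f` is concave on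
`(0, ∞)`, and `b = 0` that it is monotone there. Hence `f'(1) ≥ 0`, and for `0 < x < 1`
concavity and `f x > 0` give `f'(1) ≤ (1 - f x) / (1 - x) < 1 / (1 - x)`, so `f'(1) ≤ 1`.
-/

open Filter Topology InnerProductSpace ContinuousLinearMap

section StarProjection

variable {A : Type*} [CStarAlgebra A] {p : A}

lemma IsStarProjection.cfc_eq (hp : IsStarProjection p) (g : ℝ → ℝ) :
    cfc g p = g 1 • p + g 0 • (1 - p) := by
  have hsp : spectrum ℝ p ⊆ {0, 1} := hp.isIdempotentElem.spectrum_subset ℝ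
  have haffine : (spectrum ℝ p).EqOn g (fun x => g 0 + (g 1 - g 0) * x) := by
    intro x hx
    rcases hsp hx with rfl | rfl <;> simp
  rw [cfc_congr haffine, cfc_const_add _ _ _ (by fun_prop) hp.isSelfAdjoint,
    cfc_const_mul_id _ _ hp.isSelfAdjoint, Algebra.algebraMap_eq_smul_one]
  module

lemma IsStarProjection.smul_add_smul_one_sub_eq_cfc (hp : IsStarProjection p) (s t : ℝ) :
    s • p + t • (1 - p) = cfc (fun x => s * x + t * (1 - x)) p := by
  simp [hp.cfc_eq]

lemma IsStarProjection.cfc_smul_add_smul_one_sub (hp : IsStarProjection p) (g : ℝ → ℝ)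
    (s t : ℝ) : cfc g (s • p + t • (1 - p)) = g s • p + g t • (1 - p) := by
  have hfin : (spectrum ℝ p).Finite :=
    (Set.toFinite {0, 1}).subset (hp.isIdempotentElem.spectrum_subset ℝ)
  rw [hp.smul_add_smul_one_sub_eq_cfc, ← cfc_comp' g _ p ((hfin.image _).continuousOn _)
    (by fun_prop) hp.isSelfAdjoint, hp.cfc_eq]
  simp

lemma IsStarProjection.spectrum_smul_add_smul_one_sub_subset (hp : IsStarProjection p)
    (s t : ℝ) : spectrum ℝ (s • p + t • (1 - p)) ⊆ {s, t} := by
  rw [hp.smul_add_smul_one_sub_eq_cfc, cfc_map_spectrum _ _ hp.isSelfAdjoint]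
  rintro _ ⟨x, hx, rfl⟩
  rcases hp.isIdempotentElem.spectrum_subset ℝ hx with rfl | rfl <;> simp

lemma IsStarProjection.isSelfAdjoint_smul_add_smul_one_sub (hp : IsStarProjection p)
    (s t : ℝ) : IsSelfAdjoint (s • p + t • (1 - p)) := by
  rw [hp.smul_add_smul_one_sub_eq_cfc]
  exact cfc_predicate _ _

end StarProjection

section TwoEigenvalueOp

variable {H : Type*} [NormedAddCommGroup H] [InnerProductSpace ℂ H]

noncomputable def twoEigenvalueOp (u : H) (s t : ℝ) : H →L[ℂ] H :=
  s • rankOne ℂ u u + t • (1 - rankOne ℂ u u)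

lemma re_inner_twoEigenvalueOp_apply (u x : H) (s t : ℝ) :
    RCLike.re (inner ℂ (twoEigenvalueOp u s t x) x)
      = s * ‖inner ℂ u x‖ ^ 2 + t * (‖x‖ ^ 2 - ‖inner ℂ u x‖ ^ 2) := by
  simp only [twoEigenvalueOp, add_apply, smul_apply, sub_apply, one_apply_eq_self, rankOne_apply,
    ← Complex.coe_smul, inner_add_left, inner_sub_left, inner_smul_left, RCLike.conj_mul,
    inner_self_eq_norm_sq_to_K, Complex.conj_ofReal, map_add]
  simp [← Complex.ofReal_pow]

variable [CompleteSpace H] {u : H}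

lemma cfc_twoEigenvalueOp (hu : ‖u‖ = 1) (g : ℝ → ℝ) (s t : ℝ) :
    cfc g (twoEigenvalueOp u s t) = twoEigenvalueOp u (g s) (g t) :=
  (isStarProjection_rankOne_self hu).cfc_smul_add_smul_one_sub g s t

lemma isSelfAdjoint_twoEigenvalueOp (hu : ‖u‖ = 1) (s t : ℝ) :
    IsSelfAdjoint (twoEigenvalueOp u s t) :=
  (isStarProjection_rankOne_self hu).isSelfAdjoint_smul_add_smul_one_sub s t

lemma spectrum_twoEigenvalueOp_subset_Ioi (hu : ‖u‖ = 1) {s t : ℝ} (hs : 0 < s) (ht : 0 < t) :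
    spectrum ℝ (twoEigenvalueOp u s t) ⊆ Ioi 0 := by
  intro x hx
  rcases (isStarProjection_rankOne_self hu).spectrum_smul_add_smul_one_sub_subset s t hx
    with rfl | rfl
  exacts [hs, ht]

end TwoEigenvalueOp

section OperatorMonotonePos

variable {f : ℝ → ℝ}

theorem OperatorMonotonePos.le_of_twoEigenvalueOp_le (hf : OperatorMonotonePos f)
    {H : Type} [NormedAddCommGroup H] [InnerProductSpace ℂ H] [CompleteSpace H] {u e : H}
    (hu : ‖u‖ = 1) (he : ‖e‖ = 1) {s t d m : ℝ} (hs : 0 < s) (ht : 0 < t) (hd : 0 < d)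
    (hm : 0 < m) (hle : twoEigenvalueOp u s t ≤ twoEigenvalueOp e d m) :
    ‖inner ℂ u e‖ ^ 2 * f s + (1 - ‖inner ℂ u e‖ ^ 2) * f t ≤ f d := by
  have hcfc := hf H _ _ (isSelfAdjoint_twoEigenvalueOp hu s t)
    (isSelfAdjoint_twoEigenvalueOp he d m) (spectrum_twoEigenvalueOp_subset_Ioi hu hs ht)
    (spectrum_twoEigenvalueOp_subset_Ioi he hd hm) hle
  have := ((le_def _ _).1 hcfc).re_inner_nonneg_left e
  rw [cfc_twoEigenvalueOp hu, cfc_twoEigenvalueOp he, sub_apply, inner_sub_left, map_sub,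
    re_inner_twoEigenvalueOp_apply, re_inner_twoEigenvalueOp_apply,
    inner_self_eq_one_of_norm_eq_one he, norm_one, he] at this
  linarith

local notation "ℂ²" => EuclideanSpace ℂ (Fin 2)

-- The second eigenvalue of `B` makes the `2 × 2` matrix `B - A` singular, hence rank one.
lemma twoEigenvalueOp_sub_twoEigenvalueOp (a b s t δ : ℝ) (hab : a ^ 2 + b ^ 2 = 1) (hδ : δ ≠ 0) :
    twoEigenvalueOp (!₂[1, 0] : ℂ²) (a ^ 2 * s + b ^ 2 * t + δ)
        (b ^ 2 * s + a ^ 2 * t + ((s - t) * a * b) ^ 2 / δ)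
      - twoEigenvalueOp (!₂[(a : ℂ), b] : ℂ²) s t
      = ((δ : ℂ)⁻¹) • rankOne ℂ (!₂[(δ : ℂ), -((s - t) * a * b : ℝ)] : ℂ²)
          !₂[(δ : ℂ), -((s - t) * a * b : ℝ)] := by
  have hδ' : (δ : ℂ) ≠ 0 := by exact_mod_cast hδ
  have hab' : (a : ℂ) ^ 2 + b ^ 2 = 1 := by exact_mod_cast hab
  ext x i
  fin_cases i <;>
    simp only [twoEigenvalueOp, sub_apply, add_apply, smul_apply, rankOne_apply,
      one_apply_eq_self, PiLp.inner_apply, RCLike.inner_apply, Fin.sum_univ_two, Fin.isValue,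
      Fin.zero_eta, Fin.mk_one, Matrix.cons_val_zero, Matrix.cons_val_one, Matrix.cons_val_fin_one,
      PiLp.sub_apply, PiLp.add_apply, PiLp.smul_apply, smul_eq_mul, Complex.real_smul, map_one,
      map_zero, map_neg, map_mul, map_sub, Complex.conj_ofReal, mul_one, mul_zero, add_zero,
      zero_add, sub_self, sub_zero, smul_zero, mul_neg, Complex.ofReal_add, Complex.ofReal_mul,
      Complex.ofReal_pow, Complex.ofReal_sub, Complex.ofReal_div] <;>
    field_simp
  · linear_combination (t * x 0) * hab'
  · linear_combination (δ * t * x 1) * hab'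

theorem OperatorMonotonePos.sq_mul_add_sq_mul_le (hf : OperatorMonotonePos f) {s t : ℝ} (hs : 0 < s)
    (ht : 0 < t) {a b : ℝ} (hab : a ^ 2 + b ^ 2 = 1) {δ : ℝ} (hδ : 0 < δ) :
    a ^ 2 * f s + b ^ 2 * f t ≤ f (a ^ 2 * s + b ^ 2 * t + δ) := by
  have hu : ‖(!₂[(a : ℂ), b] : ℂ²)‖ = 1 := by
    simp [EuclideanSpace.norm_eq, Fin.sum_univ_two, hab]
  have he : ‖(!₂[1, 0] : ℂ²)‖ = 1 := by
    simp [EuclideanSpace.norm_eq, Fin.sum_univ_two]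
  have hue : ‖inner ℂ (!₂[(a : ℂ), b] : ℂ²) !₂[1, 0]‖ ^ 2 = a ^ 2 := by
    simp [PiLp.inner_apply, Fin.sum_univ_two]
  have hm : 0 < b ^ 2 * s + a ^ 2 * t + ((s - t) * a * b) ^ 2 / δ := by
    have hst : 0 < b ^ 2 * s + a ^ 2 * t := by
      rcases le_total s t with h | h <;> nlinarith
    positivity
  have hle := (le_def _ _).2 <| (twoEigenvalueOp_sub_twoEigenvalueOp a b s t δ hab hδ.ne').symm ▸
    (isPositive_rankOne_self _).smul_of_nonneg
      (by rw [← Complex.ofReal_inv]; exact Complex.zero_le_real.2 (by positivity))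
  have := hf.le_of_twoEigenvalueOp_le hu he hs ht (by positivity) hm hle
  rwa [hue, ← hab, add_sub_cancel_left] at this

theorem OperatorMonotonePos.monotoneOn (hf : OperatorMonotonePos f) : MonotoneOn f (Ioi 0) := by
  intro x hx y _ hxy
  rcases hxy.eq_or_lt with rfl | hlt
  · rfl
  · simpa using hf.sq_mul_add_sq_mul_le hx hx (a := 1) (b := 0) (by norm_num) (sub_pos.2 hlt)

theorem OperatorMonotonePos.concaveOn (hf : OperatorMonotonePos f)
    (hcont : ContinuousOn f (Ioi 0)) : ConcaveOn ℝ (Ioi 0) f := by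
  refine ⟨convex_Ioi 0, fun x hx y hy α β hα hβ hαβ => ?_⟩
  have hz : 0 < α • x + β • y := convex_Ioi 0 hx hy hα hβ hαβ
  simp only [smul_eq_mul] at hz ⊢
  set z := α * x + β * y
  have hshift : ∀ δ > 0, α * f x + β * f y ≤ f (z + δ) := by
    intro δ hδ
    simpa [Real.sq_sqrt hα, Real.sq_sqrt hβ] using
      hf.sq_mul_add_sq_mul_le hx hy (a := √α) (b := √β)
        (by simp [Real.sq_sqrt hα, Real.sq_sqrt hβ, hαβ]) hδ
  have hlim : Tendsto f (𝓝[>] z) (𝓝 (f z)) :=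
    (hcont.continuousAt (Ioi_mem_nhds hz)).tendsto.mono_left nhdsWithin_le_nhds
  refine ge_of_tendsto hlim (eventually_nhdsWithin_of_forall fun w hw => ?_)
  simpa using hshift (w - z) (sub_pos.2 hw)

end OperatorMonotonePos

/-- A differentiable operator monotone function `f : ℝ⁺ → ℝ⁺` with `f 1 = 1`
satisfies `0 ≤ f'(1) ≤ 1`. -/
theorem deriv_one_mem_Icc (f : ℝ → ℝ) (hpos : ∀ x ∈ Ioi (0:ℝ), 0 < f x)
    (hdiff : ∀ x ∈ Ioi (0:ℝ), DifferentiableAt ℝ f x)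
    (hf : OperatorMonotonePos f) (hone : f 1 = 1) :
    deriv f 1 ∈ Icc (0:ℝ) 1 := by
  have hconc := hf.concaveOn fun x hx => (hdiff x hx).continuousAt.continuousWithinAt
  have hd := hdiff 1 (mem_Ioi.2 one_pos)
  refine ⟨?_, ?_⟩
  · calc 0 ≤ slope f 1 2 := (slope_nonneg_iff_of_le one_le_two).2 <|
          hf.monotoneOn (by norm_num) (by norm_num) one_le_two
      _ ≤ deriv f 1 := hconc.slope_le_deriv (by norm_num) (by norm_num) one_lt_two hd
  · -- `f'(1) ≤ (1 - f x) / (1 - x) < 1 / (1 - x)` for `0 < x < 1`; take `1 - x = 1 / f'(1)`.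
    by_contra! h
    set D := deriv f 1
    have hx : 0 < 1 - D⁻¹ := sub_pos.2 (inv_lt_one_of_one_lt₀ h)
    have hslope := hconc.deriv_le_slope hx (by norm_num) (by simp [h.trans' one_pos]) hd
    rw [slope_def_field, hone, sub_sub_cancel, div_inv_eq_mul] at hslope
    nlinarith [hpos _ hx]
end

section
/- Let f : ℝ⁺ → ℝ⁺ be differentiable and operator monotone. Then |(f(t₁) − f(t₂))/(t₁ − t₂)|² ≤ f'(t₁)·f'(t₂) for all distinct t₁, t₂ > 0. Consequently, if f'(1) = 0 then f is constant. -/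
/-!
Let `δ = t₁ - t₂`, `0 < h < |δ|` and `s = h² / δ`. The real symmetric matrix
`B = [[t₁ + h - s, c], [c, t₂ + h + s]]` with `c = √(h² - s²)` has eigenvalues `t₁ + h`, `t₂ + h`,
and it dominates `A = diag(t₁, t₂)` because `B - A` is a rank-one positive matrix. On a two-point
spectrum `f` coincides with its chord, so `f(A)` and `f(B)` are affine in `A` and `B`, and
positivity of the `2 × 2` matrix `f(B) - f(A)` reads
`D² (h² - s²) ≤ (f(t₁ + h) - f(t₁) - D s) (f(t₂ + h) - f(t₂) + D s)`, where `D` is the divided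
difference of `f` at `t₁ + h`, `t₂ + h`. Dividing by `h²` and letting `h → 0⁺` gives
`Δf(t₁, t₂)² ≤ f'(t₁) f'(t₂)`. If `f'(1) = 0`, every divided difference `Δf(1, t)` then vanishes.
-/

open Set

open Filter Topology Polynomial ComplexOrder

lemma spectrum_subset_pair_of_mul_eq_zero {𝕜 A : Type*} [Field 𝕜] [Ring A] [Algebra 𝕜 A]
    [Nontrivial A] {a : A} {x y : 𝕜}
    (h : (a - algebraMap 𝕜 A x) * (a - algebraMap 𝕜 A y) = 0) : spectrum 𝕜 a ⊆ {x, y} := by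
  intro r hr
  have := spectrum.subset_polynomial_aeval a ((X - C x) * (X - C y)) ⟨r, hr, rfl⟩
  simpa [h, sub_eq_zero] using this

lemma cfc_eq_slope_of_spectrum_subset {A : Type*} [CStarAlgebra A] {a : A} (ha : IsSelfAdjoint a)
    (f : ℝ → ℝ) {x y : ℝ} (hs : spectrum ℝ a ⊆ {x, y}) :
    cfc f a = slope f y x • a + algebraMap ℝ A (f y - slope f y x * y) := by
  rw [cfc_congr (g := fun t => slope f y x * t + (f y - slope f y x * y)),
    cfc_add_const _ (slope f y x * ·) a, cfc_const_mul_id _ a]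
  intro t ht
  rcases hs ht with rfl | rfl
  · have := sub_smul_slope f y t
    simp only [smul_eq_mul, vsub_eq_sub] at this
    linear_combination -this
  · ring

noncomputable def symOp (p q r : ℝ) : EuclideanSpace ℂ (Fin 2) →L[ℂ] EuclideanSpace ℂ (Fin 2) :=
  Matrix.toEuclideanCLM (𝕜 := ℂ) !![(p : ℂ), q; q, r]

noncomputable abbrev matrixOpEquiv : Matrix (Fin 2) (Fin 2) ℂ ≃ₐ[ℝ]
    (EuclideanSpace ℂ (Fin 2) →L[ℂ] EuclideanSpace ℂ (Fin 2)) :=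
  (Matrix.toEuclideanCLM (𝕜 := ℂ) (n := Fin 2)).toAlgEquiv.restrictScalars ℝ

lemma symOp_eq (p q r : ℝ) : symOp p q r = matrixOpEquiv !![(p : ℂ), q; q, r] := rfl

lemma isSelfAdjoint_symOp (p q r : ℝ) : IsSelfAdjoint (symOp p q r) := by
  rw [symOp, IsSelfAdjoint, ← map_star]
  congr 1
  ext i j
  fin_cases i <;> fin_cases j <;> simp [Matrix.star_apply]

lemma symOp_sub (p q r p' q' r' : ℝ) :
    symOp p q r - symOp p' q' r' = symOp (p - p') (q - q') (r - r') := by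
  rw [symOp_eq, symOp_eq, symOp_eq, ← map_sub]
  congr 1
  ext i j
  fin_cases i <;> fin_cases j <;> simp

lemma smul_symOp_add_algebraMap (m c p q r : ℝ) :
    m • symOp p q r + algebraMap ℝ _ c = symOp (m * p + c) (m * q) (m * r + c) := by
  rw [symOp_eq, symOp_eq, ← matrixOpEquiv.commutes, ← map_smul, ← map_add]
  congr 1
  ext i j
  fin_cases i <;> fin_cases j <;> simp [Matrix.algebraMap_matrix_apply]

lemma spectrum_symOp_subset {p q r x y : ℝ} (h₁ : p + r = x + y) (h₂ : p * r - q ^ 2 = x * y) :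
    spectrum ℝ (symOp p q r) ⊆ {x, y} := by
  apply spectrum_subset_pair_of_mul_eq_zero
  rw [symOp_eq, ← matrixOpEquiv.commutes, ← matrixOpEquiv.commutes, ← map_sub, ← map_sub,
    ← map_mul, map_eq_zero_iff _ matrixOpEquiv.injective]
  ext i j
  fin_cases i <;> fin_cases j <;>
    simp [Matrix.algebraMap_matrix_apply, Matrix.mul_apply, Fin.sum_univ_two] <;> norm_cast <;> grind

lemma symOp_nonneg_iff (p q r : ℝ) : 0 ≤ symOp p q r ↔ (!![(p : ℂ), q; q, r]).PosSemidef := by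
  rw [ContinuousLinearMap.nonneg_iff_isPositive, ← ContinuousLinearMap.isPositive_toLinearMap_iff,
    symOp, Matrix.coe_toEuclideanCLM_eq_toEuclideanLin, Matrix.isPositive_toEuclideanLin_iff]

lemma sq_le_mul_of_posSemidef {p q r : ℝ} (h : (!![(p : ℂ), q; q, r]).PosSemidef) :
    q ^ 2 ≤ p * r := by
  have hdet := h.det_nonneg
  rw [Matrix.det_fin_two_of] at hdet
  have hdet' : (0 : ℝ) ≤ p * r - q * q := by exact_mod_cast hdet
  linarith [sq q]

lemma posSemidef_sqrt_mul_sqrt {a b : ℝ} (ha : 0 ≤ a) (hb : 0 ≤ b) :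
    (!![(a : ℂ), ↑(√a * √b); ↑(√a * √b), b]).PosSemidef := by
  convert Matrix.posSemidef_vecMulVec_self_star ![(√a : ℂ), √b] using 1
  ext i j
  fin_cases i <;> fin_cases j <;>
    simp [Matrix.vecMulVec_apply, ← Complex.ofReal_mul, ha, hb, mul_comm]

theorem OperatorMonotonePos.sq_slope_mul_le_of_shift {f : ℝ → ℝ} (hf : OperatorMonotonePos f)
    {t₁ t₂ h s : ℝ} (ht₁ : 0 < t₁) (ht₂ : 0 < t₂) (hs₁ : 0 ≤ h - s) (hs₂ : 0 ≤ h + s)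
    (hs : s * (t₁ - t₂) = h ^ 2) :
    slope f (t₂ + h) (t₁ + h) ^ 2 * (h ^ 2 - s ^ 2) ≤
      (f (t₁ + h) - f t₁ - slope f (t₂ + h) (t₁ + h) * s) *
        (f (t₂ + h) - f t₂ + slope f (t₂ + h) (t₁ + h) * s) := by
  set D := slope f (t₂ + h) (t₁ + h)
  set Δ := slope f t₂ t₁
  set c := √(h - s) * √(h + s)
  have hc : c ^ 2 = h ^ 2 - s ^ 2 := by
    rw [mul_pow, Real.sq_sqrt hs₁, Real.sq_sqrt hs₂]
    ring
  have hA := isSelfAdjoint_symOp t₁ 0 t₂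
  have hB := isSelfAdjoint_symOp (t₁ + h - s) c (t₂ + h + s)
  have hσA : spectrum ℝ (symOp t₁ 0 t₂) ⊆ {t₁, t₂} := spectrum_symOp_subset (by ring) (by ring)
  have hσB : spectrum ℝ (symOp (t₁ + h - s) c (t₂ + h + s)) ⊆ {t₁ + h, t₂ + h} :=
    spectrum_symOp_subset (by ring) (by linear_combination hs - hc)
  have hAB : symOp t₁ 0 t₂ ≤ symOp (t₁ + h - s) c (t₂ + h + s) := by
    rw [← sub_nonneg, symOp_sub, symOp_nonneg_iff, show t₁ + h - s - t₁ = h - s by ring, sub_zero,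
      show t₂ + h + s - t₂ = h + s by ring]
    exact posSemidef_sqrt_mul_sqrt hs₁ hs₂
  have hmono := hf _ _ _ hA hB (hσA.trans (pair_subset ht₁ ht₂))
    (hσB.trans (pair_subset (show 0 < t₁ + h by linarith) (show 0 < t₂ + h by linarith))) hAB
  rw [cfc_eq_slope_of_spectrum_subset hA f hσA, cfc_eq_slope_of_spectrum_subset hB f hσB,
    ← sub_nonneg, smul_symOp_add_algebraMap, smul_symOp_add_algebraMap, symOp_sub,
    symOp_nonneg_iff] at hmono
  have hD : (t₁ - t₂) * D = f (t₁ + h) - f (t₂ + h) := by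
    simpa using sub_smul_slope f (t₂ + h) (t₁ + h)
  have hΔ : (t₁ - t₂) * Δ = f t₁ - f t₂ := by simpa using sub_smul_slope f t₂ t₁
  calc D ^ 2 * (h ^ 2 - s ^ 2) = (D * c - Δ * 0) ^ 2 := by rw [← hc]; ring
    _ ≤ _ := sq_le_mul_of_posSemidef hmono
    _ = _ := by
      congr 1
      · linear_combination hD - hΔ
      · ring

theorem OperatorMonotonePos.eventually_sq_slope_shift_le {f : ℝ → ℝ}
    (hf : OperatorMonotonePos f) {t₁ t₂ : ℝ} (ht₁ : 0 < t₁) (ht₂ : 0 < t₂) (hne : t₁ ≠ t₂) :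
    ∀ᶠ h in 𝓝[>] 0, slope f (t₂ + h) (t₁ + h) ^ 2 * (1 - (h / (t₁ - t₂)) ^ 2) ≤
      (h⁻¹ * (f (t₁ + h) - f t₁) - slope f (t₂ + h) (t₁ + h) * (h / (t₁ - t₂))) *
        (h⁻¹ * (f (t₂ + h) - f t₂) + slope f (t₂ + h) (t₁ + h) * (h / (t₁ - t₂))) := by
  set δ := t₁ - t₂
  have hδ : 0 < |δ| := abs_pos.mpr (sub_ne_zero.mpr hne)
  filter_upwards [Ioo_mem_nhdsGT hδ] with h ⟨hh, hhδ⟩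
  set D := slope f (t₂ + h) (t₁ + h)
  have hs : |h ^ 2 / δ| ≤ h := by
    rw [abs_div, abs_of_nonneg (sq_nonneg h), div_le_iff₀ hδ]
    nlinarith
  have hshift := hf.sq_slope_mul_le_of_shift (s := h ^ 2 / δ) ht₁ ht₂
    (by linarith [le_abs_self (h ^ 2 / δ)]) (by linarith [neg_abs_le (h ^ 2 / δ)])
    (div_mul_cancel₀ _ (abs_pos.mp hδ))
  have hh2 : 0 < h ^ 2 := by positivity
  calc D ^ 2 * (1 - (h / δ) ^ 2) = D ^ 2 * (h ^ 2 - (h ^ 2 / δ) ^ 2) / h ^ 2 := by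
        field_simp
    _ ≤ (f (t₁ + h) - f t₁ - D * (h ^ 2 / δ)) * (f (t₂ + h) - f t₂ + D * (h ^ 2 / δ))
          / h ^ 2 := div_le_div_of_nonneg_right hshift hh2.le
    _ = _ := by field_simp

theorem OperatorMonotonePos.sq_slope_le_deriv_mul_deriv {f : ℝ → ℝ} (hf : OperatorMonotonePos f)
    {t₁ t₂ : ℝ} (ht₁ : 0 < t₁) (ht₂ : 0 < t₂) (hd₁ : DifferentiableAt ℝ f t₁)
    (hd₂ : DifferentiableAt ℝ f t₂) :
    slope f t₁ t₂ ^ 2 ≤ deriv f t₁ * deriv f t₂ := by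
  rcases eq_or_ne t₁ t₂ with rfl | hne
  · simpa using mul_self_nonneg (deriv f t₁)
  have hδ : t₁ - t₂ ≠ 0 := sub_ne_zero.mpr hne
  have hD : Tendsto (fun h => slope f (t₂ + h) (t₁ + h)) (𝓝[>] 0) (𝓝 (slope f t₂ t₁)) := by
    have hcont : ContinuousAt (fun h => slope f (t₂ + h) (t₁ + h)) 0 := by
      simp only [slope_def_field]
      exact ((hd₁.continuousAt.comp_of_eq (by fun_prop) (add_zero t₁)).sub
        (hd₂.continuousAt.comp_of_eq (by fun_prop) (add_zero t₂))).div (by fun_prop)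
        (by simpa using hδ)
    simpa using hcont.tendsto.mono_left nhdsWithin_le_nhds
  have hk : Tendsto (fun h => h / (t₁ - t₂)) (𝓝[>] 0) (𝓝 0) := by
    simpa using ((continuous_id.div_const (t₁ - t₂)).tendsto 0).mono_left nhdsWithin_le_nhds
  have hd₁' : Tendsto (fun h => h⁻¹ * (f (t₁ + h) - f t₁)) (𝓝[>] 0) (𝓝 (deriv f t₁)) := by
    simpa using hd₁.hasDerivAt.tendsto_slope_zero_right
  have hd₂' : Tendsto (fun h => h⁻¹ * (f (t₂ + h) - f t₂)) (𝓝[>] 0) (𝓝 (deriv f t₂)) := by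
    simpa using hd₂.hasDerivAt.tendsto_slope_zero_right
  have hlim := le_of_tendsto_of_tendsto ((hD.pow 2).mul ((hk.pow 2).const_sub 1))
    ((hd₁'.sub (hD.mul hk)).mul (hd₂'.add (hD.mul hk)))
    (hf.eventually_sq_slope_shift_le ht₁ ht₂ hne)
  simpa [slope_comm] using hlim

theorem divided_difference_sq_le_and_const_general (f : ℝ → ℝ)
    (hdiff : ∀ x ∈ Ioi (0:ℝ), DifferentiableAt ℝ f x)
    (hf : OperatorMonotonePos f) :
    (∀ t₁ t₂ : ℝ, 0 < t₁ → 0 < t₂ → t₁ ≠ t₂ →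
        ((f t₁ - f t₂) / (t₁ - t₂)) ^ 2 ≤ deriv f t₁ * deriv f t₂) ∧
      (deriv f 1 = 0 → ∀ s : ℝ, 0 < s → ∀ t : ℝ, 0 < t → f s = f t) := by
  have hslope : ∀ t₁ t₂ : ℝ, 0 < t₁ → 0 < t₂ → slope f t₁ t₂ ^ 2 ≤ deriv f t₁ * deriv f t₂ :=
    fun t₁ t₂ ht₁ ht₂ => hf.sq_slope_le_deriv_mul_deriv ht₁ ht₂ (hdiff t₁ ht₁) (hdiff t₂ ht₂)
  refine ⟨fun t₁ t₂ ht₁ ht₂ _ => ?_, fun hd1 s hs t ht => ?_⟩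
  · rw [← slope_def_field, mul_comm]
    exact hslope t₂ t₁ ht₂ ht₁
  · have hconst : ∀ r, 0 < r → f r = f 1 := by
      intro r hr
      have h0 : slope f 1 r = 0 := by
        have := hslope 1 r one_pos hr
        rw [hd1, zero_mul] at this
        exact (pow_eq_zero_iff two_ne_zero).mp (le_antisymm this (sq_nonneg _))
      simpa [h0, sub_eq_zero] using (sub_smul_slope f 1 r).symm
    rw [hconst s hs, hconst t ht]

/-- For a differentiable operator monotone `f : ℝ⁺ → ℝ⁺`, the squared divided
difference is dominated by `f'(t₁)·f'(t₂)`; hence `f'(1) = 0` forces `f` constant. -/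
theorem divided_difference_sq_le_and_const (f : ℝ → ℝ)
    (hpos : ∀ x ∈ Ioi (0:ℝ), 0 < f x)
    (hdiff : ∀ x ∈ Ioi (0:ℝ), DifferentiableAt ℝ f x)
    (hf : OperatorMonotonePos f) :
    (∀ t₁ t₂ : ℝ, 0 < t₁ → 0 < t₂ → t₁ ≠ t₂ →
        ((f t₁ - f t₂) / (t₁ - t₂)) ^ 2 ≤ deriv f t₁ * deriv f t₂) ∧
      (deriv f 1 = 0 → ∀ s : ℝ, 0 < s → ∀ t : ℝ, 0 < t → f s = f t) :=
  divided_difference_sq_le_and_const_general f hdiff hf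
end

section
/- For every λ ∈ [0,1], the function f_λ(t) = t/(λ + (1−λ)t) is operator monotone on ℝ⁺, and more generally, given a finite positive Borel measure μ on [0,1], the function f(t) = ∫_{[0,1]} t/(λ + (1−λ)t) dμ(λ) is operator monotone on ℝ⁺; f(1) = μ([0,1]). -/
open Set

open MeasureTheory

/-!
For `λ < 1` one has `t / (λ + (1 - λ) t) = (1 - λ)⁻¹ (1 - λ (λ + (1 - λ) t)⁻¹)`, and inversion is
antitone on strictly positive elements of a C⋆-algebra, so each kernel is operator monotone
(`λ = 1` gives the identity). The integrand is jointly continuous on `[0,1] × spectrum`, hence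
bounded there, so the continuous functional calculus commutes with the integral over `[0,1]`;
since Bochner integrals preserve the order of a C⋆-algebra, the mixture is operator monotone as
well. At `t = 1` every kernel equals `1`.
-/

noncomputable def lownerKernel (l t : ℝ) : ℝ := t / (l + (1 - l) * t)

lemma lownerKernel_denom_pos {l t : ℝ} (hl : l ∈ Icc (0 : ℝ) 1) (ht : 0 < t) :
    0 < l + (1 - l) * t := by
  rcases hl with ⟨h0, h1⟩
  nlinarith [mul_nonneg (sub_nonneg.2 h1) ht.le]

lemma lownerKernel_apply_one (l : ℝ) : lownerKernel l 1 = 1 := by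
  simp [lownerKernel]

lemma lownerKernel_eq_of_lt_one {l t : ℝ} (hl : l < 1) (ht : l + (1 - l) * t ≠ 0) :
    lownerKernel l t = (1 - l)⁻¹ * (1 - l * (l + (1 - l) * t)⁻¹) := by
  have : 1 - l ≠ 0 := sub_ne_zero.2 hl.ne'
  rw [lownerKernel, eq_comm, inv_mul_eq_iff_eq_mul₀ this, div_eq_mul_inv]
  field_simp
  ring

lemma continuousOn_uncurry_lownerKernel :
    ContinuousOn (Function.uncurry lownerKernel) (Icc 0 1 ×ˢ Ioi 0) :=
  continuousOn_snd.div (by fun_prop) fun p hp => (lownerKernel_denom_pos hp.1 hp.2).ne'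

lemma operatorMonotonePos_of_monotoneOn {g : ℝ → ℝ}
    (h : ∀ (H : Type) [NormedAddCommGroup H] [InnerProductSpace ℂ H] [CompleteSpace H],
      MonotoneOn (cfc g : (H →L[ℂ] H) → H →L[ℂ] H) {a | IsStrictlyPositive a}) :
    OperatorMonotonePos g := by
  intro H _ _ _ A B hA hB hsA hsB hAB
  exact h H (CStarAlgebra.isStrictlyPositive_iff_isSelfAdjoint_and_spectrum_pos.2 ⟨hA, hsA⟩)
    (CStarAlgebra.isStrictlyPositive_iff_isSelfAdjoint_and_spectrum_pos.2 ⟨hB, hsB⟩) hAB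

section CStarAlgebra

variable {A : Type*} [CStarAlgebra A] [PartialOrder A] [StarOrderedRing A]

lemma antitoneOn_cfc_inv_const_add_mul {c d : ℝ} (hc : 0 ≤ c) (hd : 0 < d) :
    AntitoneOn (cfc (fun t => (c + d * t)⁻¹) : A → A) {a | IsStrictlyPositive a} := by
  have hcfc : ∀ x : A, IsStrictlyPositive x →
      cfc (fun t => (c + d * t)⁻¹) x = Ring.inverse (algebraMap ℝ A c + d • x) := by
    intro x hx
    rw [cfc_inv (fun t => c + d * t) x fun t ht => by
      have := hx.spectrum_pos ht; positivity, cfc_const_add c (d * ·) x, cfc_const_mul_id d x]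
  intro a ha b hb hab
  rw [hcfc a ha, hcfc b hb]
  have hpos : IsStrictlyPositive (algebraMap ℝ A c + d • a) :=
    IsStrictlyPositive.nonneg_add (algebraMap_nonneg (β := A) hc) (ha.smul hd)
  exact CStarAlgebra.ringInverse_le_ringInverse (by gcongr) hpos

lemma monotoneOn_cfc_lownerKernel {l : ℝ} (hl : l ∈ Icc (0 : ℝ) 1) :
    MonotoneOn (cfc (lownerKernel l) : A → A) {a | IsStrictlyPositive a} := by
  intro a ha b hb hab
  rcases hl.2.lt_or_eq with hl1 | rfl
  · have hcfc : ∀ x : A, IsStrictlyPositive x → cfc (lownerKernel l) x =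
        (1 - l)⁻¹ • (1 - l • cfc (fun t => (l + (1 - l) * t)⁻¹) x) := by
      intro x hx
      have hden : ∀ t ∈ spectrum ℝ x, l + (1 - l) * t ≠ 0 := fun t ht =>
        (lownerKernel_denom_pos hl (hx.spectrum_pos ht)).ne'
      have hinv : ContinuousOn (fun t => (l + (1 - l) * t)⁻¹) (spectrum ℝ x) :=
        ContinuousOn.inv₀ (by fun_prop) hden
      rw [cfc_congr fun t ht => lownerKernel_eq_of_lt_one hl1 (hden t ht),
        cfc_const_mul _ (fun t => 1 - l * (l + (1 - l) * t)⁻¹) x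
          (continuousOn_const.sub (continuousOn_const.mul hinv)),
        cfc_sub (fun _ => 1) (fun t => l * (l + (1 - l) * t)⁻¹) x continuousOn_const
          (continuousOn_const.mul hinv), cfc_const_one ℝ x, cfc_const_mul _ _ x hinv]
    rw [hcfc a ha, hcfc b hb]
    gcongr
    · exact hl.1
    · exact antitoneOn_cfc_inv_const_add_mul hl.1 (sub_pos.2 hl1) ha hb hab
  · have hid : lownerKernel 1 = id := funext fun t => by simp [lownerKernel]
    rwa [hid, cfc_id ℝ a ha.isSelfAdjoint, cfc_id ℝ b hb.isSelfAdjoint]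

lemma monotoneOn_cfc_setIntegral {X : Type*} [TopologicalSpace X] [MeasurableSpace X]
    [OpensMeasurableSpace X] [SecondCountableTopology X] {μ : Measure X}
    [IsFiniteMeasureOnCompacts μ] {s : Set X} (hs : IsCompact s) (hsm : MeasurableSet s)
    {f : X → ℝ → ℝ} (hf : ContinuousOn (Function.uncurry f) (s ×ˢ Ioi 0))
    (hmono : ∀ x ∈ s, MonotoneOn (cfc (f x) : A → A) {a | IsStrictlyPositive a}) :
    MonotoneOn (cfc (fun t => ∫ x in s, f x t ∂μ) : A → A) {a | IsStrictlyPositive a} := by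
  have : IsFiniteMeasure (μ.restrict s) := isFiniteMeasure_restrict.2 hs.measure_lt_top.ne
  have hcfc : ∀ c : A, IsStrictlyPositive c →
      cfc (fun t => ∫ x in s, f x t ∂μ) c = ∫ x in s, cfc (f x) c ∂μ ∧
        IntegrableOn (fun x => cfc (f x) c) s μ := by
    intro c hc
    have hcont : ContinuousOn (Function.uncurry f) (s ×ˢ spectrum ℝ c) :=
      hf.mono (prod_mono subset_rfl fun z hz => hc.spectrum_pos hz)
    obtain ⟨C, hC⟩ := (hs.prod (spectrum.isCompact c)).exists_bound_of_continuousOn hcont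
    have hbound : ∀ᵐ x ∂(μ.restrict s), ∀ z ∈ spectrum ℝ c, ‖f x z‖ ≤ C :=
      ae_restrict_of_forall_mem hsm fun x hx z hz => hC (x, z) ⟨hx, hz⟩
    exact ⟨cfc_setIntegral hsm f (fun _ => C) c hcont hbound (hasFiniteIntegral_const C)
        hc.isSelfAdjoint,
      integrableOn_cfc hsm f (fun _ => C) c hcont hbound (hasFiniteIntegral_const C)
        hc.isSelfAdjoint⟩
  intro a ha b hb hab
  rw [(hcfc a ha).1, (hcfc b hb).1]
  exact setIntegral_mono_on (hcfc a ha).2 (hcfc b hb).2 hsm fun x hx => hmono x hx ha hb hab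

end CStarAlgebra

/-- Each `t ↦ t/(λ + (1−λ)t)`, `λ ∈ [0,1]`, is operator monotone on `ℝ⁺`; more
generally any integral of these against a finite positive Borel measure on `[0,1]`
is operator monotone, and `f(1) = μ([0,1])`. -/
theorem lowner_integrand_operatorMonotone :
    (∀ l ∈ Icc (0:ℝ) 1, OperatorMonotonePos (fun t => t / (l + (1 - l) * t))) ∧
      ∀ (μ : Measure ℝ), IsFiniteMeasure μ → μ (Icc (0:ℝ) 1)ᶜ = 0 →
        ∀ f : ℝ → ℝ, (∀ t : ℝ, f t = ∫ l in Icc (0:ℝ) 1, t / (l + (1 - l) * t) ∂μ) →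
          OperatorMonotonePos f ∧ f 1 = (μ (Icc (0:ℝ) 1)).toReal := by
  refine ⟨fun l hl => operatorMonotonePos_of_monotoneOn fun H _ _ _ =>
    monotoneOn_cfc_lownerKernel hl, ?_⟩
  intro μ _ _ f hf
  obtain rfl : f = fun t => ∫ l in Icc (0:ℝ) 1, lownerKernel l t ∂μ := funext hf
  refine ⟨operatorMonotonePos_of_monotoneOn fun H _ _ _ =>
    monotoneOn_cfc_setIntegral isCompact_Icc measurableSet_Icc continuousOn_uncurry_lownerKernel
      fun l hl => monotoneOn_cfc_lownerKernel hl, ?_⟩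
  simp [lownerKernel_apply_one, Measure.real]
end
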